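/- Let ρ > 0, σ > 0 and μ ≥ 0. Define a : ℝ → ℝ by a(x) = −(ρ/σ + σ/2)·tanh(σx) + ρμ/(σ·cosh(σx)) and let a′ denote its derivative. Then for all x ∈ ℝ, ½(a(x)² + a′(x)) + ½(ρ + σ²/2 + ρμ/2) ≤ (1/8)·[ρ(6μ + 8) + 3σ² + (4ρ²/σ²)(μ² + μ + 1)]; i.e., the function φ(x; θ) = ½(a(x)² + a′(x)) − l(θ) with l(θ) = −½(ρ + σ²/2 + ρμ/2) is bounded above by r(θ) = (1/8){ρ(6μ+8) + 3σ² + (4ρ²/σ²)(μ²+μ+1)}, so the Pearson diffusion satisfies the boundedness condition of the exact algorithm EA1. -/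

import Mathlib

/-!
Write `t = tanh (σx)` and `q = sech (σx)`, so that `t² + q² = 1`. With `A = ρ/σ + σ/2` and
`B = ρμ/σ`, both nonnegative, the drift is `a = -A t + B q` and `a' = -σ (A q² + B t q)`.
Dropping `-σ A q² ≤ 0` and using `t², q² ≤ 1` and `-t q ≤ 1/2` (from `(t + q)² ≥ 0`) gives
`a² + a' ≤ A² + B² + B (2A + σ) / 2`, which is exactly `2 r(θ) + 2 l(θ)`.
-/

open Real

theorem Real.hasDerivAt_tanh (x : ℝ) : HasDerivAt tanh ((cosh x)⁻¹ ^ 2) x := by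
  have h := (hasDerivAt_sinh x).div (hasDerivAt_cosh x) (cosh_pos x).ne'
  rw [show tanh = fun y => sinh y / cosh y from funext tanh_eq_sinh_div_cosh]
  refine h.congr_deriv ?_
  field_simp
  linear_combination cosh_sq x

theorem Real.hasDerivAt_inv_cosh (x : ℝ) :
    HasDerivAt (fun y => (cosh y)⁻¹) (-(tanh x * (cosh x)⁻¹)) x := by
  refine ((hasDerivAt_cosh x).inv (cosh_pos x).ne').congr_deriv ?_
  rw [tanh_eq_sinh_div_cosh]
  ring

theorem Real.tanh_sq_add_inv_cosh_sq (x : ℝ) : tanh x ^ 2 + (cosh x)⁻¹ ^ 2 = 1 := by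
  rw [tanh_eq_sinh_div_cosh]
  field_simp
  linear_combination (cosh_sq x).symm

noncomputable def tanhSechDrift (A B σ u : ℝ) : ℝ := -A * tanh (σ * u) + B / cosh (σ * u)

theorem hasDerivAt_tanhSechDrift (A B σ x : ℝ) :
    HasDerivAt (tanhSechDrift A B σ)
      (-A * σ * (cosh (σ * x))⁻¹ ^ 2 - B * σ * tanh (σ * x) * (cosh (σ * x))⁻¹) x := by
  have hlin : HasDerivAt (fun u => σ * u) σ x := by simpa using (hasDerivAt_id x).const_mul σ
  have htanh := ((hasDerivAt_tanh _).comp x hlin).const_mul (-A)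
  have hsech := ((hasDerivAt_inv_cosh _).comp x hlin).const_mul B
  have hfun : tanhSechDrift A B σ = fun u => -A * tanh (σ * u) + B * (cosh (σ * u))⁻¹ := by
    funext u; rw [tanhSechDrift, div_eq_mul_inv]
  rw [hfun]
  exact (htanh.add hsech).congr_deriv (by ring)

theorem tanhSechDrift_sq_add_deriv_le {A B σ : ℝ} (hA : 0 ≤ A) (hB : 0 ≤ B) (hσ : 0 ≤ σ)
    (x : ℝ) :
    tanhSechDrift A B σ x ^ 2 + deriv (tanhSechDrift A B σ) x ≤
      A ^ 2 + B ^ 2 + B * (2 * A + σ) / 2 := by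
  rw [(hasDerivAt_tanhSechDrift A B σ x).deriv, tanhSechDrift, div_eq_mul_inv]
  set t := tanh (σ * x)
  set q := (cosh (σ * x))⁻¹
  have hunit : t ^ 2 + q ^ 2 = 1 := tanh_sq_add_inv_cosh_sq _
  have hcross : -(t * q) ≤ 1 / 2 := by nlinarith [sq_nonneg (t + q)]
  nlinarith [mul_le_mul_of_nonneg_left hcross (by positivity : 0 ≤ B * (2 * A + σ)),
    mul_nonneg (mul_nonneg hA hσ) (sq_nonneg q), sq_nonneg t, sq_nonneg q]

/-- For the Lamperti-transformed Pearson diffusion with drift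
`a(x) = -(ρ/σ + σ/2)·tanh(σx) + ρμ/(σ·cosh(σx))`, the function
`φ(x;θ) = ½(a(x)² + a′(x)) - l(θ)` with `l(θ) = -½(ρ + σ²/2 + ρμ/2)` is
bounded above by `r(θ) = (1/8){ρ(6μ+8) + 3σ² + (4ρ²/σ²)(μ²+μ+1)}`, so the
Pearson diffusion satisfies the boundedness condition of EA1. -/
theorem pearson_phi_upper_bound (ρ σ μ : ℝ) (hρ : 0 < ρ) (hσ : 0 < σ) (hμ : 0 ≤ μ) :
    ∀ x : ℝ,
      (1 / 2) *
          ((fun u => -(ρ / σ + σ / 2) * Real.tanh (σ * u) +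
              ρ * μ / (σ * Real.cosh (σ * u))) x ^ 2 +
            deriv (fun u => -(ρ / σ + σ / 2) * Real.tanh (σ * u) +
              ρ * μ / (σ * Real.cosh (σ * u))) x) +
          (1 / 2) * (ρ + σ ^ 2 / 2 + ρ * μ / 2) ≤
        (1 / 8) * (ρ * (6 * μ + 8) + 3 * σ ^ 2 +
          (4 * ρ ^ 2 / σ ^ 2) * (μ ^ 2 + μ + 1)) := by
  intro x
  have hdrift : (fun u => -(ρ / σ + σ / 2) * Real.tanh (σ * u) +
      ρ * μ / (σ * Real.cosh (σ * u))) = tanhSechDrift (ρ / σ + σ / 2) (ρ * μ / σ) σ := by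
    funext u; rw [tanhSechDrift, div_div]
  rw [hdrift]
  have hbound := tanhSechDrift_sq_add_deriv_le (A := ρ / σ + σ / 2) (B := ρ * μ / σ)
    (by positivity) (by positivity) hσ.le x
  have hconst : (ρ / σ + σ / 2) ^ 2 + (ρ * μ / σ) ^ 2 +
        ρ * μ / σ * (2 * (ρ / σ + σ / 2) + σ) / 2 =
      (1 / 4) * (ρ * (6 * μ + 8) + 3 * σ ^ 2 + (4 * ρ ^ 2 / σ ^ 2) * (μ ^ 2 + μ + 1)) -
        (ρ + σ ^ 2 / 2 + ρ * μ / 2) := by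
    field_simp
    ring
  linarith
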